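/- Let P_X be a pmf on 𝒳, let W be a random variable on 𝒲 = {−m_x, …, m_s}, let Y be drawn given W by a conditional pmf b with b(𝒴₀(W) | W) = 1, let X₂ ~ P_X be independent of the pair (W, Y), and set S₂ = W + Y (so S₂ ∈ 𝒮) and W₂ = S₂ − X₂. Then I(W; Y) + H(W₂ | Y) − H(W) ≥ J*, where J* = min over pmfs θ on 𝒮 of [H(S̃ − X̃) − H(S̃)] for independent X̃ ~ P_X, S̃ ~ θ. -/

import Mathlib

/-!
Put `S₂ = W + Y`. For fixed `Y` the map `W ↦ S₂` is a bijection, so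
`I(W; Y) - H(W) = -H(W | Y) = -H(S₂ | Y)`, and the claim reads `H(S₂ - X₂ | Y) - H(S₂ | Y) ≥ J*`.
Given `Y = y`, the demand `X₂ ~ P_X` is still independent of `S₂`, whose conditional law `θ_y`
lives on `𝒮`, so the conditional gap is `H(S - X) - H(S) = I(S - X; X)` for `S ~ θ_y`, which is at
least `J*`. Averaging over `y` finishes the proof; working with the unnormalized weights
`P(S₂ = s, Y = y)` makes the averaging an identity, because the gap `H(S - X) - H(S)` is homogeneous
of degree one in the weights.
-/

open Finset
open scoped Classical

namespace SmartMeter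

/-! ### Basic information measures for finitely supported distributions.
All entropies and mutual informations are in bits (base-2 logarithms). -/

/-- Probability that the random variable `Z` takes the value `z` under the pmf `p`. -/
noncomputable def pr {Ω α : Type*} [Fintype Ω] [DecidableEq α]
    (p : Ω → ℝ) (Z : Ω → α) (z : α) : ℝ :=
  ∑ ω ∈ Finset.univ.filter (fun ω => Z ω = z), p ω

/-- Shannon entropy (in bits) of the random variable `Z` under the pmf `p`. -/
noncomputable def ent {Ω α : Type*} [Fintype Ω] [DecidableEq α]
    (p : Ω → ℝ) (Z : Ω → α) : ℝ :=
  -∑ z ∈ Finset.univ.image Z, pr p Z z * Real.logb 2 (pr p Z z)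

/-- Mutual information `I(A; B)`. -/
noncomputable def mutInfo {Ω α β : Type*} [Fintype Ω] [DecidableEq α] [DecidableEq β]
    (p : Ω → ℝ) (A : Ω → α) (B : Ω → β) : ℝ :=
  ent p A + ent p B - ent p (fun ω => (A ω, B ω))

/-- Conditional entropy `H(A | C)`. -/
noncomputable def condEnt {Ω α γ : Type*} [Fintype Ω] [DecidableEq α] [DecidableEq γ]
    (p : Ω → ℝ) (A : Ω → α) (C : Ω → γ) : ℝ :=
  ent p (fun ω => (A ω, C ω)) - ent p C

/-- Conditional mutual information `I(A; B | C)`. -/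
noncomputable def condMutInfo {Ω α β γ : Type*} [Fintype Ω] [DecidableEq α] [DecidableEq β]
    [DecidableEq γ] (p : Ω → ℝ) (A : Ω → α) (B : Ω → β) (C : Ω → γ) : ℝ :=
  ent p (fun ω => (A ω, C ω)) + ent p (fun ω => (B ω, C ω))
    - ent p (fun ω => (A ω, B ω, C ω)) - ent p C

/-- `p` is a probability mass function on the finite type `Ω`. -/
def IsPMF {Ω : Type*} [Fintype Ω] (p : Ω → ℝ) : Prop :=
  (∀ ω, 0 ≤ p ω) ∧ ∑ ω, p ω = 1

/-- Extension of a pmf on `{0, …, n}` to an integer-indexed function (zero out of range). -/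
noncomputable def extZ {n : ℕ} (f : Fin (n + 1) → ℝ) (k : ℤ) : ℝ :=
  if h : 0 ≤ k ∧ k ≤ (n : ℤ) then f ⟨k.toNat, by omega⟩ else 0

/-! ### The single-letter quantity `J*` -/

/-- `I(S - X; X)` for independent `X ~ PX` on `{0,…,mx}` and `S ~ θ` on `{0,…,ms}`. -/
noncomputable def iidMI (mx ms : ℕ) (PX : Fin (mx + 1) → ℝ) (θ : Fin (ms + 1) → ℝ) : ℝ :=
  mutInfo (fun ω : Fin (mx + 1) × Fin (ms + 1) => PX ω.1 * θ ω.2)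
    (fun ω => ((ω.2 : ℕ) : ℤ) - ((ω.1 : ℕ) : ℤ)) (fun ω => ω.1)

/-- `J* = min over pmfs θ on 𝒮 of I(S - X; X)`. -/
noncomputable def Jstar (mx ms : ℕ) (PX : Fin (mx + 1) → ℝ) : ℝ :=
  sInf {r : ℝ | ∃ θ : Fin (ms + 1) → ℝ, IsPMF θ ∧ iidMI mx ms PX θ = r}

/-! ### The structured policy `b*` -/

/-- `ξ(w) = Σ_{(x,s) : s - x = w} PX(x) θ(s)`, the pmf of `W = S - X`. -/
noncomputable def xiOf (mx ms : ℕ) (PX : Fin (mx + 1) → ℝ) (θ : Fin (ms + 1) → ℝ)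
    (w : ℤ) : ℝ :=
  ∑ x : Fin (mx + 1), ∑ s : Fin (ms + 1),
    if ((s : ℕ) : ℤ) - ((x : ℕ) : ℤ) = w then PX x * θ s else 0

/-- The structured policy with respect to `(θ, ξ)`:
`b(y|w) = PX(y) θ(y + w) / ξ(w)` for `y ∈ 𝒳 ∩ 𝒴₀(w)` (when `ξ(w) > 0`), else `0`. -/
noncomputable def bstar (mx my ms : ℕ) (PX : Fin (mx + 1) → ℝ) (θ : Fin (ms + 1) → ℝ)
    (w : ℤ) (y : Fin (my + 1)) : ℝ :=
  if xiOf mx ms PX θ w = 0 then 0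
  else extZ PX ((y : ℕ) : ℤ) * extZ θ (((y : ℕ) : ℤ) + w) / xiOf mx ms PX θ w

/-! ### Trajectory spaces, policies and induced joint laws.
Time is indexed from `0`; `ω = (s₁, x, y)` records the initial battery state `S₁ = ω.1`,
the demands `X_{t+1} = ω.2.1 t` and the outputs `Y_{t+1} = ω.2.2 t` for `t = 0, …, T-1`. -/

/-- Trajectories of horizon `T`. -/
abbrev Traj (mx my ms T : ℕ) :=
  Fin (ms + 1) × (Fin T → Fin (mx + 1)) × (Fin T → Fin (my + 1))

variable {mx my ms T : ℕ}

/-- Demand at (0-based) time `t`, as an integer (junk value `0` for `t ≥ T`). -/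
def Xat (ω : Traj mx my ms T) (t : ℕ) : ℤ :=
  if h : t < T then ((ω.2.1 ⟨t, h⟩ : ℕ) : ℤ) else 0

/-- Output at (0-based) time `t`, as an integer (junk value `0` for `t ≥ T`). -/
def Yat (ω : Traj mx my ms T) (t : ℕ) : ℤ :=
  if h : t < T then ((ω.2.2 ⟨t, h⟩ : ℕ) : ℤ) else 0

/-- Battery state at (0-based) time `t`: `S_{t+1} = S_t + Y_t - X_t`, `Sat ω 0 = S₁`. -/
def Sat (ω : Traj mx my ms T) (t : ℕ) : ℤ :=
  ((ω.1 : ℕ) : ℤ) + ∑ i ∈ Finset.range t, (Yat ω i - Xat ω i)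

/-- `W_t = S_t - X_t`. -/
def Wat (ω : Traj mx my ms T) (t : ℕ) : ℤ := Sat ω t - Xat ω t

/-- A general causal (class `Q_A`) randomized battery policy:
`q_t(y_t | x^t, s^t, y^{t-1})`; since `s^t` is determined by `(s₁, x^{t-1}, y^{t-1})`,
the policy is a function of `(x^t, s₁, y^{t-1})`. -/
def PolicyA (mx my ms : ℕ) : Type :=
  (t : ℕ) → (Fin (t + 1) → Fin (mx + 1)) → Fin (ms + 1) → (Fin t → Fin (my + 1)) →
    Fin (my + 1) → ℝ

/-- A class-`Q_B` policy: `q_t(y_t | x_t, s_t, y^{t-1})`. -/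
def PolicyB (mx my ms : ℕ) : Type :=
  (t : ℕ) → Fin (mx + 1) → ℤ → (Fin t → Fin (my + 1)) → Fin (my + 1) → ℝ

/-- The battery state `S_t` computed from `s₁` and the history `(x^t, y^{t-1})`. -/
def hstate {t : ℕ} (s1 : Fin (ms + 1)) (x : Fin (t + 1) → Fin (mx + 1))
    (y : Fin t → Fin (my + 1)) : ℤ :=
  ((s1 : ℕ) : ℤ) + ∑ i : Fin t, (((y i : ℕ) : ℤ) - ((x i.castSucc : ℕ) : ℤ))

/-- Each `q_t(· | x^t, s^t, y^{t-1})` is a pmf on `𝒴`. -/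
def CondPMFA (q : PolicyA mx my ms) : Prop :=
  ∀ (t : ℕ) (x : Fin (t + 1) → Fin (mx + 1)) (s1 : Fin (ms + 1)) (y : Fin t → Fin (my + 1)),
    (∀ yt, 0 ≤ q t x s1 y yt) ∧ ∑ yt, q t x s1 y yt = 1

/-- Feasibility of a class-`Q_A` policy: conditional pmfs supported on
`𝒴₀(s_t - x_t) = {y ∈ 𝒴 : s_t - x_t + y ∈ 𝒮}`. -/
def FeasibleA (q : PolicyA mx my ms) : Prop :=
  CondPMFA q ∧
  ∀ (t : ℕ) (x : Fin (t + 1) → Fin (mx + 1)) (s1 : Fin (ms + 1)) (y : Fin t → Fin (my + 1)),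
    ∀ yt, q t x s1 y yt ≠ 0 →
      0 ≤ hstate s1 x y - ((x (Fin.last t) : ℕ) : ℤ) + ((yt : ℕ) : ℤ) ∧
      hstate s1 x y - ((x (Fin.last t) : ℕ) : ℤ) + ((yt : ℕ) : ℤ) ≤ (ms : ℤ)

/-- Each `q_t(· | x_t, s_t, y^{t-1})` is a pmf on `𝒴`. -/
def CondPMFB (q : PolicyB mx my ms) : Prop :=
  ∀ (t : ℕ) (xt : Fin (mx + 1)) (s : ℤ) (y : Fin t → Fin (my + 1)),
    (∀ yt, 0 ≤ q t xt s y yt) ∧ ∑ yt, q t xt s y yt = 1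

/-- Feasibility of a class-`Q_B` policy. -/
def FeasibleB (q : PolicyB mx my ms) : Prop :=
  CondPMFB q ∧
  ∀ (t : ℕ) (xt : Fin (mx + 1)) (s : ℤ) (y : Fin t → Fin (my + 1)),
    0 ≤ s → s ≤ (ms : ℤ) →
    ∀ yt, q t xt s y yt ≠ 0 →
      0 ≤ s - ((xt : ℕ) : ℤ) + ((yt : ℕ) : ℤ) ∧
      s - ((xt : ℕ) : ℤ) + ((yt : ℕ) : ℤ) ≤ (ms : ℤ)

/-- The demand prefix `x^t = (x_0, …, x_t)` of a trajectory. -/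
def prefX (ω : Traj mx my ms T) (t : Fin T) : Fin ((t : ℕ) + 1) → Fin (mx + 1) :=
  fun i => ω.2.1 ⟨(i : ℕ), lt_of_le_of_lt (Nat.lt_succ_iff.mp i.isLt) t.isLt⟩

/-- The output prefix `y^{t-1} = (y_0, …, y_{t-1})` of a trajectory. -/
def prefY (ω : Traj mx my ms T) (t : Fin T) : Fin (t : ℕ) → Fin (my + 1) :=
  fun i => ω.2.2 ⟨(i : ℕ), i.isLt.trans t.isLt⟩

/-- Joint law on trajectories induced by i.i.d. demand `PX`, initial battery pmf `PS1`
(independent of the demand), and a class-`Q_A` policy `q`. -/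
noncomputable def jointA (PS1 : Fin (ms + 1) → ℝ) (PX : Fin (mx + 1) → ℝ)
    (q : PolicyA mx my ms) (T : ℕ) (ω : Traj mx my ms T) : ℝ :=
  PS1 ω.1 * ∏ t : Fin T,
    (PX (ω.2.1 t) * q (t : ℕ) (prefX ω t) ω.1 (prefY ω t) (ω.2.2 t))

/-- Weight of a demand trajectory under a Markov chain `(PX1, Qm)`. -/
noncomputable def markovWt (PX1 : Fin (mx + 1) → ℝ) (Qm : Fin (mx + 1) → Fin (mx + 1) → ℝ)
    {T : ℕ} (x : Fin T → Fin (mx + 1)) : ℝ :=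
  ∏ t : Fin T,
    if _h : (t : ℕ) = 0 then PX1 (x t)
    else Qm (x ⟨(t : ℕ) - 1, lt_of_le_of_lt (Nat.sub_le _ _) t.isLt⟩) (x t)

/-- Joint law on trajectories induced by Markov demand and a class-`Q_A` policy. -/
noncomputable def jointAMarkov (PS1 : Fin (ms + 1) → ℝ) (PX1 : Fin (mx + 1) → ℝ)
    (Qm : Fin (mx + 1) → Fin (mx + 1) → ℝ) (q : PolicyA mx my ms) (T : ℕ)
    (ω : Traj mx my ms T) : ℝ :=
  PS1 ω.1 * markovWt PX1 Qm ω.2.1 *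
    ∏ t : Fin T, q (t : ℕ) (prefX ω t) ω.1 (prefY ω t) (ω.2.2 t)

/-- Joint law on trajectories induced by Markov demand and a class-`Q_B` policy. -/
noncomputable def jointBMarkov (PS1 : Fin (ms + 1) → ℝ) (PX1 : Fin (mx + 1) → ℝ)
    (Qm : Fin (mx + 1) → Fin (mx + 1) → ℝ) (q : PolicyB mx my ms) (T : ℕ)
    (ω : Traj mx my ms T) : ℝ :=
  PS1 ω.1 * markovWt PX1 Qm ω.2.1 *
    ∏ t : Fin T, q (t : ℕ) (ω.2.1 t) (Sat ω (t : ℕ)) (prefY ω t) (ω.2.2 t)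

/-- The memoryless time-invariant policy `q_t(y | x, s) = b*(y | s - x)`, as a member of the
class of general causal policies. -/
noncomputable def structuredPolicyA (mx my ms : ℕ) (PX : Fin (mx + 1) → ℝ)
    (θ : Fin (ms + 1) → ℝ) : PolicyA mx my ms :=
  fun t x s1 y yt => bstar mx my ms PX θ (hstate s1 x y - ((x (Fin.last t) : ℕ) : ℤ)) yt

noncomputable def negMulLogb (x : ℝ) : ℝ := Real.negMulLog x / Real.log 2

@[simp]
lemma negMulLogb_zero : negMulLogb 0 = 0 := by
  simp [negMulLogb]

lemma negMulLogb_mul (x y : ℝ) :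
    negMulLogb (x * y) = y * negMulLogb x + x * negMulLogb y := by
  simp only [negMulLogb, Real.negMulLog_mul]
  ring

lemma negMulLogb_nonneg {x : ℝ} (h0 : 0 ≤ x) (h1 : x ≤ 1) : 0 ≤ negMulLogb x :=
  div_nonneg (Real.negMulLog_nonneg h0 h1) (Real.log_nonneg one_le_two)

lemma negMulLogb_le_one_sub_self {x : ℝ} (h0 : 0 ≤ x) :
    negMulLogb x ≤ (1 - x) / Real.log 2 :=
  div_le_div_of_nonneg_right (Real.negMulLog_le_one_sub_self h0)
    (Real.log_pos one_lt_two).le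

section InformationMeasures

variable {Ω α β : Type*} [Fintype Ω] [DecidableEq α] [DecidableEq β]
  {p : Ω → ℝ} {Z : Ω → α} {s : Finset α}

lemma pr_eq_sum_ite (p : Ω → ℝ) (Z : Ω → α) (z : α) :
    pr p Z z = ∑ ω, if Z ω = z then p ω else 0 :=
  Finset.sum_filter _ _

lemma pr_nonneg (hp : ∀ ω, 0 ≤ p ω) (Z : Ω → α) (z : α) : 0 ≤ pr p Z z :=
  Finset.sum_nonneg fun ω _ => hp ω

lemma pr_id [DecidableEq Ω] (p : Ω → ℝ) (ω : Ω) : pr p (fun ω => ω) ω = p ω := by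
  simp [pr_eq_sum_ite]

lemma pr_le_one (hp : IsPMF p) (Z : Ω → α) (z : α) : pr p Z z ≤ 1 :=
  hp.2 ▸ Finset.sum_le_sum_of_subset_of_nonneg (Finset.subset_univ _) fun ω _ _ => hp.1 ω

lemma ent_eq_sum_negMulLogb (p : Ω → ℝ) (Z : Ω → α) :
    ent p Z = ∑ z ∈ univ.image Z, negMulLogb (pr p Z z) := by
  simp only [ent, negMulLogb, Real.negMulLog, Real.logb, ← Finset.sum_neg_distrib]
  exact Finset.sum_congr rfl fun _ _ => by ring

lemma pr_eq_zero_of_notMem (hs : ∀ ω, p ω ≠ 0 → Z ω ∈ s) {z : α} (hz : z ∉ s) :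
    pr p Z z = 0 := by
  refine Finset.sum_eq_zero fun ω hω => ?_
  by_contra h
  exact hz ((Finset.mem_filter.mp hω).2 ▸ hs ω h)

lemma ent_eq_sum_of_support (hs : ∀ ω, p ω ≠ 0 → Z ω ∈ s) :
    ent p Z = ∑ z ∈ s, negMulLogb (pr p Z z) := by
  have himage : ∀ ω, p ω ≠ 0 → Z ω ∈ univ.image Z := fun ω _ =>
    Finset.mem_image_of_mem Z (mem_univ ω)
  rw [ent_eq_sum_negMulLogb]
  calc ∑ z ∈ univ.image Z, negMulLogb (pr p Z z)
      = ∑ z ∈ univ.image Z ∪ s, negMulLogb (pr p Z z) :=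
        Finset.sum_subset Finset.subset_union_left fun z _ hz => by
          rw [pr_eq_zero_of_notMem himage hz, negMulLogb_zero]
    _ = ∑ z ∈ s, negMulLogb (pr p Z z) :=
        (Finset.sum_subset Finset.subset_union_right fun z _ hz => by
          rw [pr_eq_zero_of_notMem hs hz, negMulLogb_zero]).symm

lemma pr_comp_of_support (hs : ∀ ω, p ω ≠ 0 → Z ω ∈ s) (f : α → β) (c : β) :
    pr p (fun ω => f (Z ω)) c = ∑ z ∈ s, if f z = c then pr p Z z else 0 := by
  have hfiber : ∀ z, (if f z = c then pr p Z z else 0)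
      = ∑ ω, if Z ω = z then (if f z = c then p ω else 0) else 0 := fun z => by
    rw [pr_eq_sum_ite]
    split_ifs <;> simp
  rw [Finset.sum_congr rfl fun z _ => hfiber z, Finset.sum_comm, pr_eq_sum_ite]
  refine Finset.sum_congr rfl fun ω _ => ?_
  rw [Finset.sum_ite_eq]
  by_cases hω : Z ω ∈ s
  · rw [if_pos hω]
  · rw [if_neg hω, not_imp_comm.mp (hs ω) hω, ite_self]

lemma sum_pr_of_support (hs : ∀ ω, p ω ≠ 0 → Z ω ∈ s) : ∑ z ∈ s, pr p Z z = ∑ ω, p ω := by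
  simpa [pr_eq_sum_ite] using (pr_comp_of_support hs (fun _ => ()) ()).symm

lemma ent_comp_injective {g : α → β} (hg : Function.Injective g) (p : Ω → ℝ) (Z : Ω → α) :
    ent p (fun ω => g (Z ω)) = ent p Z := by
  have hpr : ∀ z, pr p (fun ω => g (Z ω)) (g z) = pr p Z z := fun z => by
    simp only [pr_eq_sum_ite, hg.eq_iff]
  rw [ent_eq_sum_negMulLogb, ent_eq_sum_negMulLogb,
    show univ.image (fun ω => g (Z ω)) = (univ.image Z).image g from Finset.image_image.symm,
    Finset.sum_image fun a _ b _ h => hg h]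
  simp only [hpr]

end InformationMeasures

lemma isPMF_prod_kernel {A B : Type*} [Fintype A] [Fintype B] {ξ : A → ℝ} {b : A → B → ℝ}
    (hξ : IsPMF ξ) (hb : ∀ a, IsPMF (b a)) : IsPMF fun ω : A × B => ξ ω.1 * b ω.1 ω.2 := by
  refine ⟨fun ω => mul_nonneg (hξ.1 _) ((hb _).1 _), ?_⟩
  simp only [Fintype.sum_prod_type, ← Finset.mul_sum, fun a => (hb a).2, mul_one, hξ.2]

section SingleLetter

variable {PX : Fin (mx + 1) → ℝ} {θ : Fin (ms + 1) → ℝ}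

/-- `H(S - X) - H(S)` for independent `X ~ PX` and `S` with weights `θ`, not necessarily
normalized. -/
noncomputable def entGap (mx ms : ℕ) (PX : Fin (mx + 1) → ℝ) (θ : Fin (ms + 1) → ℝ) : ℝ :=
  ∑ w ∈ Icc (-(mx : ℤ)) ms, negMulLogb (xiOf mx ms PX θ w) - ∑ s, negMulLogb (θ s)

lemma fin_sub_fin_mem_Icc (x : Fin (mx + 1)) (s : Fin (ms + 1)) :
    ((s : ℕ) : ℤ) - ((x : ℕ) : ℤ) ∈ Icc (-(mx : ℤ)) ms := by
  have := x.isLt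
  have := s.isLt
  rw [Finset.mem_Icc]
  omega

lemma pr_sub_eq_xiOf (w : ℤ) :
    pr (fun ω : Fin (mx + 1) × Fin (ms + 1) => PX ω.1 * θ ω.2)
      (fun ω => ((ω.2 : ℕ) : ℤ) - ((ω.1 : ℕ) : ℤ)) w = xiOf mx ms PX θ w := by
  rw [pr_eq_sum_ite, Fintype.sum_prod_type, xiOf]

lemma sum_xiOf (hPX : ∑ x, PX x = 1) :
    ∑ w ∈ Icc (-(mx : ℤ)) ms, xiOf mx ms PX θ w = ∑ s, θ s := by
  simp only [← pr_sub_eq_xiOf]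
  rw [sum_pr_of_support fun ω _ => fin_sub_fin_mem_Icc ω.1 ω.2, Fintype.sum_prod_type]
  simp only [← Finset.mul_sum, ← Finset.sum_mul, hPX, one_mul]

lemma xiOf_const_mul (c : ℝ) (w : ℤ) :
    xiOf mx ms PX (fun s => c * θ s) w = c * xiOf mx ms PX θ w := by
  simp only [xiOf, Finset.mul_sum, mul_ite, mul_zero]
  exact Finset.sum_congr rfl fun _ _ => Finset.sum_congr rfl fun _ _ => by ring_nf

lemma iidMI_eq_entGap (hPX : IsPMF PX) (hθ : IsPMF θ) :
    iidMI mx ms PX θ = entGap mx ms PX θ := by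
  set q : Fin (mx + 1) × Fin (ms + 1) → ℝ := fun ω => PX ω.1 * θ ω.2
  have hX : ent q (fun ω => ω.1) = ∑ x, negMulLogb (PX x) := by
    rw [ent_eq_sum_of_support (s := univ) fun _ _ => mem_univ _]
    refine Finset.sum_congr rfl fun x _ => ?_
    simp [pr_eq_sum_ite, q, Fintype.sum_prod_type, ← Finset.mul_sum, hθ.2]
  have hSX : ent q (fun ω => (((ω.2 : ℕ) : ℤ) - ((ω.1 : ℕ) : ℤ), ω.1))
      = ∑ x, negMulLogb (PX x) + ∑ s, negMulLogb (θ s) := by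
    have hinj : Function.Injective fun ω : Fin (mx + 1) × Fin (ms + 1) =>
        (((ω.2 : ℕ) : ℤ) - ((ω.1 : ℕ) : ℤ), ω.1) := by
      rintro ⟨x, s⟩ ⟨x', s'⟩ h
      simp only [Prod.mk.injEq] at h
      obtain ⟨h, rfl⟩ := h
      rw [sub_left_inj, Nat.cast_inj, Fin.val_inj] at h
      rw [h]
    refine (ent_comp_injective hinj q fun ω => ω).trans ?_
    rw [ent_eq_sum_of_support (s := univ) fun _ _ => mem_univ _]
    simp only [pr_id, q, Fintype.sum_prod_type, negMulLogb_mul, Finset.sum_add_distrib,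
      ← Finset.sum_mul, ← Finset.mul_sum, hθ.2, hPX.2, one_mul]
  rw [iidMI, mutInfo, hX, hSX, entGap, ent_eq_sum_of_support fun ω _ => fin_sub_fin_mem_Icc ω.1 ω.2]
  simp only [pr_sub_eq_xiOf]
  ring

lemma entGap_const_mul (hPX : ∑ x, PX x = 1) (hθ : ∑ s, θ s = 1) (c : ℝ) :
    entGap mx ms PX (fun s => c * θ s) = c * entGap mx ms PX θ := by
  simp only [entGap, xiOf_const_mul, negMulLogb_mul, Finset.sum_add_distrib, ← Finset.sum_mul,
    ← Finset.mul_sum, sum_xiOf hPX, hθ]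
  ring

lemma neg_div_log_two_le_iidMI (hPX : IsPMF PX) (hθ : IsPMF θ) :
    -((ms : ℝ) / Real.log 2) ≤ iidMI mx ms PX θ := by
  have hgap : 0 ≤ ∑ w ∈ Icc (-(mx : ℤ)) ms, negMulLogb (xiOf mx ms PX θ w) := by
    have hq := isPMF_prod_kernel hPX fun _ => hθ
    refine Finset.sum_nonneg fun w _ => ?_
    rw [← pr_sub_eq_xiOf]
    exact negMulLogb_nonneg (pr_nonneg hq.1 _ _) (pr_le_one hq _ _)
  have hent : ∑ s, negMulLogb (θ s) ≤ ms / Real.log 2 := by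
    calc ∑ s, negMulLogb (θ s) ≤ ∑ s, (1 - θ s) / Real.log 2 :=
          Finset.sum_le_sum fun s _ => negMulLogb_le_one_sub_self (hθ.1 s)
      _ = ms / Real.log 2 := by
          rw [← Finset.sum_div, Finset.sum_sub_distrib, hθ.2]
          simp
  rw [iidMI_eq_entGap hPX hθ, entGap]
  linarith

lemma Jstar_le_iidMI (hPX : IsPMF PX) (hθ : IsPMF θ) : Jstar mx ms PX ≤ iidMI mx ms PX θ :=
  csInf_le ⟨_, by rintro r ⟨θ', hθ', rfl⟩; exact neg_div_log_two_le_iidMI hPX hθ'⟩ ⟨θ, hθ, rfl⟩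

lemma sum_mul_Jstar_le_entGap (hPX : IsPMF PX) (hθ : ∀ s, 0 ≤ θ s) :
    (∑ s, θ s) * Jstar mx ms PX ≤ entGap mx ms PX θ := by
  set c := ∑ s, θ s
  rcases (Finset.sum_nonneg fun s _ => hθ s).eq_or_lt with hc | hc
  · have hzero : ∀ s, θ s = 0 := fun s =>
      (Finset.sum_eq_zero_iff_of_nonneg fun s _ => hθ s).mp hc.symm s (mem_univ s)
    obtain rfl : θ = fun _ => 0 := funext hzero
    simp [c, entGap, xiOf]
  · have hnorm : IsPMF fun s => θ s / c :=
      ⟨fun s => div_nonneg (hθ s) hc.le, by rw [← Finset.sum_div, div_self hc.ne']⟩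
    have hθc : θ = fun s => c * (θ s / c) := funext fun s => by rw [mul_div_cancel₀ _ hc.ne']
    rw [hθc, entGap_const_mul hPX.2 hnorm.2, ← iidMI_eq_entGap hPX hnorm]
    exact mul_le_mul_of_nonneg_left (Jstar_le_iidMI hPX hnorm) hc.le

end SingleLetter

lemma sum_image_natCast_prod {β : Type*} [Fintype β] (ms : ℕ) (g : ℤ × β → ℝ) :
    ∑ z ∈ (univ.image fun s : Fin (ms + 1) => ((s : ℕ) : ℤ)) ×ˢ univ, g z
      = ∑ y, ∑ s : Fin (ms + 1), g ((s : ℕ), y) := by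
  rw [Finset.sum_product_right]
  exact Finset.sum_congr rfl fun y _ =>
    Finset.sum_image fun a _ b _ h => Fin.ext (Nat.cast_injective h)

section ConditionalBound

variable {Ω β : Type*} [Fintype Ω] [Fintype β] [DecidableEq β] {p : Ω → ℝ}
  {PX : Fin (mx + 1) → ℝ} {S : Ω → ℤ} {Y : Ω → β} {X : Ω → Fin (mx + 1)}

theorem Jstar_le_condEnt_sub_sub_condEnt (hp : IsPMF p) (hPX : IsPMF PX)
    (hS : ∀ ω, p ω ≠ 0 → 0 ≤ S ω ∧ S ω ≤ ms)
    (hindep : ∀ s y x, pr p (fun ω => ((S ω, Y ω), X ω)) ((s, y), x)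
      = pr p (fun ω => (S ω, Y ω)) (s, y) * PX x) :
    Jstar mx ms PX ≤ condEnt p (fun ω => S ω - X ω) Y - condEnt p S Y := by
  set T : Finset ℤ := univ.image fun s : Fin (ms + 1) => ((s : ℕ) : ℤ)
  set M : β → Fin (ms + 1) → ℝ := fun y s => pr p (fun ω => (S ω, Y ω)) ((s : ℕ), y)
  have hSY : ∀ ω, p ω ≠ 0 → (S ω, Y ω) ∈ T ×ˢ univ := fun ω hω => by
    obtain ⟨h0, hms⟩ := hS ω hω
    refine Finset.mem_product.mpr
      ⟨Finset.mem_image.mpr ⟨⟨(S ω).toNat, by omega⟩, mem_univ _, ?_⟩, mem_univ _⟩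
    simp [h0]
  have hWY : ∀ w y, pr p (fun ω => (S ω - X ω, Y ω)) (w, y) = xiOf mx ms PX (M y) w := by
    intro w y
    have hSYX : ∀ ω, p ω ≠ 0 → ((S ω, Y ω), X ω) ∈ (T ×ˢ univ) ×ˢ univ := fun ω hω =>
      Finset.mem_product.mpr ⟨hSY ω hω, mem_univ _⟩
    refine (pr_comp_of_support hSYX (fun z => (z.1.1 - z.2, z.1.2)) (w, y)).trans ?_
    rw [Finset.sum_product, sum_image_natCast_prod]
    simp only [hindep, Prod.mk.injEq, and_comm (b := _ = y), ite_and, Finset.sum_ite_irrel,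
      Finset.sum_const_zero, Finset.sum_ite_eq', mem_univ, if_true]
    rw [xiOf, Finset.sum_comm]
    simp only [M, mul_comm]
  have hWY_supp : ∀ ω, p ω ≠ 0 → (S ω - X ω, Y ω) ∈ Icc (-(mx : ℤ)) ms ×ˢ univ := fun ω hω => by
    have := (X ω).isLt
    have := hS ω hω
    simp only [Finset.mem_product, Finset.mem_Icc, mem_univ, and_true]
    omega
  have hent_WY : ent p (fun ω => (S ω - X ω, Y ω))
      = ∑ y, ∑ w ∈ Icc (-(mx : ℤ)) ms, negMulLogb (xiOf mx ms PX (M y) w) := by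
    rw [ent_eq_sum_of_support hWY_supp, Finset.sum_product_right]
    simp only [hWY]
  have hent_SY : ent p (fun ω => (S ω, Y ω)) = ∑ y, ∑ s, negMulLogb (M y s) := by
    rw [ent_eq_sum_of_support hSY, sum_image_natCast_prod]
  have hmass : ∑ y, ∑ s, M y s = 1 := by
    rw [← hp.2, ← sum_pr_of_support hSY, sum_image_natCast_prod]
  calc Jstar mx ms PX = ∑ y, (∑ s, M y s) * Jstar mx ms PX := by
        rw [← Finset.sum_mul, hmass, one_mul]
    _ ≤ ∑ y, entGap mx ms PX (M y) := Finset.sum_le_sum fun y _ =>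
        sum_mul_Jstar_le_entGap hPX fun s => pr_nonneg hp.1 _ _
    _ = condEnt p (fun ω => S ω - X ω) Y - condEnt p S Y := by
        rw [condEnt, condEnt, hent_WY, hent_SY]
        simp only [entGap, Finset.sum_sub_distrib]
        ring

end ConditionalBound

lemma pr_pair_last_eq_mul {A B C γ : Type*} [Fintype A] [Fintype B] [Fintype C] [DecidableEq C]
    [DecidableEq γ] (q : A → B → ℝ) {r : C → ℝ} (hr : ∑ c, r c = 1) (F : A → B → γ)
    (z : γ) (c : C) :
    pr (fun ω : A × B × C => q ω.1 ω.2.1 * r ω.2.2) (fun ω => (F ω.1 ω.2.1, ω.2.2)) (z, c)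
      = pr (fun ω : A × B × C => q ω.1 ω.2.1 * r ω.2.2) (fun ω => F ω.1 ω.2.1) z * r c := by
  simp only [pr_eq_sum_ite, Fintype.sum_prod_type, Prod.mk.injEq, ite_and, Finset.sum_ite_eq',
    mem_univ, if_true, Finset.sum_ite_irrel, Finset.sum_const_zero, ← Finset.mul_sum, hr,
    mul_one, Finset.sum_mul, ite_mul, zero_mul]

theorem dp_converse_step_general (mx my ms : ℕ)
    (PX : Fin (mx + 1) → ℝ) (hPX : IsPMF PX)
    (ξ : Fin (mx + ms + 1) → ℝ) (hξ : IsPMF ξ)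
    (b : Fin (mx + ms + 1) → Fin (my + 1) → ℝ) (hb : ∀ i, IsPMF (b i))
    (hsupp : ∀ (i : Fin (mx + ms + 1)) (y : Fin (my + 1)), b i y ≠ 0 →
      0 ≤ ((i : ℕ) : ℤ) - (mx : ℤ) + ((y : ℕ) : ℤ) ∧
      ((i : ℕ) : ℤ) - (mx : ℤ) + ((y : ℕ) : ℤ) ≤ (ms : ℤ)) :
    let p : Fin (mx + ms + 1) × Fin (my + 1) × Fin (mx + 1) → ℝ :=
      fun ω => ξ ω.1 * b ω.1 ω.2.1 * PX ω.2.2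
    let Wv : Fin (mx + ms + 1) × Fin (my + 1) × Fin (mx + 1) → ℤ :=
      fun ω => ((ω.1 : ℕ) : ℤ) - (mx : ℤ)
    let Yv : Fin (mx + ms + 1) × Fin (my + 1) × Fin (mx + 1) → Fin (my + 1) :=
      fun ω => ω.2.1
    let W2v : Fin (mx + ms + 1) × Fin (my + 1) × Fin (mx + 1) → ℤ :=
      fun ω => Wv ω + ((ω.2.1 : ℕ) : ℤ) - ((ω.2.2 : ℕ) : ℤ)
    Jstar mx ms PX ≤ mutInfo p Wv Yv + condEnt p W2v Yv - ent p Wv := by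
  intro p Wv Yv W2v
  let S2 := fun ω => Wv ω + ((Yv ω : ℕ) : ℤ)
  have hp : IsPMF p := by
    simpa only [← mul_assoc] using
      isPMF_prod_kernel hξ fun i => isPMF_prod_kernel (hb i) fun _ => hPX
  have hS2 : ∀ ω, p ω ≠ 0 → 0 ≤ S2 ω ∧ S2 ω ≤ ms := fun ω hω =>
    hsupp _ _ (right_ne_zero_of_mul (left_ne_zero_of_mul hω))
  have hindep : ∀ s y x, pr p (fun ω => ((S2 ω, Yv ω), ω.2.2)) ((s, y), x)
      = pr p (fun ω => (S2 ω, Yv ω)) (s, y) * PX x := fun s y x =>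
    pr_pair_last_eq_mul (fun i y => ξ i * b i y) hPX.2
      (fun i y => (((i : ℕ) : ℤ) - mx + ((y : ℕ) : ℤ), y)) (s, y) x
  have hinj : Function.Injective fun z : ℤ × Fin (my + 1) => (z.1 + ((z.2 : ℕ) : ℤ), z.2) := by
    rintro ⟨w, y⟩ ⟨w', y'⟩ h
    simp only [Prod.mk.injEq] at h
    obtain ⟨h, rfl⟩ := h
    rw [add_left_inj] at h
    rw [h]
  have hcondEnt_W : condEnt p Wv Yv = condEnt p S2 Yv := by
    rw [condEnt, condEnt, ← ent_comp_injective hinj p fun ω => (Wv ω, Yv ω)]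
  calc Jstar mx ms PX ≤ condEnt p W2v Yv - condEnt p S2 Yv :=
        Jstar_le_condEnt_sub_sub_condEnt hp hPX hS2 hindep
    _ = mutInfo p Wv Yv + condEnt p W2v Yv - ent p Wv := by
        rw [← hcondEnt_W]
        unfold mutInfo condEnt
        ring

/-- Dynamic-programming converse step: let `W` be a random variable on
`𝒲 = {-m_x, …, m_s}` (encoded by `i ↦ i - m_x` on `Fin (m_x + m_s + 1)`), let `Y | W ~ b`
with `b(𝒴₀(W) | W) = 1`, let `X₂ ~ P_X` be independent of `(W, Y)`, and set
`S₂ = W + Y`, `W₂ = S₂ - X₂`.  Then `I(W; Y) + H(W₂ | Y) - H(W) ≥ J*`. -/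
theorem dp_converse_step (mx my ms : ℕ) (hxy : mx ≤ my)
    (PX : Fin (mx + 1) → ℝ) (hPX : IsPMF PX)
    (ξ : Fin (mx + ms + 1) → ℝ) (hξ : IsPMF ξ)
    (b : Fin (mx + ms + 1) → Fin (my + 1) → ℝ) (hb : ∀ i, IsPMF (b i))
    (hsupp : ∀ (i : Fin (mx + ms + 1)) (y : Fin (my + 1)), b i y ≠ 0 →
      0 ≤ ((i : ℕ) : ℤ) - (mx : ℤ) + ((y : ℕ) : ℤ) ∧
      ((i : ℕ) : ℤ) - (mx : ℤ) + ((y : ℕ) : ℤ) ≤ (ms : ℤ)) :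
    let p : Fin (mx + ms + 1) × Fin (my + 1) × Fin (mx + 1) → ℝ :=
      fun ω => ξ ω.1 * b ω.1 ω.2.1 * PX ω.2.2
    let Wv : Fin (mx + ms + 1) × Fin (my + 1) × Fin (mx + 1) → ℤ :=
      fun ω => ((ω.1 : ℕ) : ℤ) - (mx : ℤ)
    let Yv : Fin (mx + ms + 1) × Fin (my + 1) × Fin (mx + 1) → Fin (my + 1) :=
      fun ω => ω.2.1
    let W2v : Fin (mx + ms + 1) × Fin (my + 1) × Fin (mx + 1) → ℤ :=
      fun ω => Wv ω + ((ω.2.1 : ℕ) : ℤ) - ((ω.2.2 : ℕ) : ℤ)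
    Jstar mx ms PX ≤ mutInfo p Wv Yv + condEnt p W2v Yv - ent p Wv :=
  dp_converse_step_general mx my ms PX hPX ξ hξ b hb hsupp

end SmartMeter
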